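/- arXiv:0812.3530 — 8 statements merged into one kernel-verified Lean document; each statement's English description precedes it below -/
import Mathlib

section
/- For every integer k ≥ 1 and every integer s with 0 ≤ s < k, the numbers b_{s,ℓ} defined by the recursion b_{0,1} = 1 and b_{s,ℓ+1} = (1/(ℓ-s)!) · Σ_{j=0}^{min(s,ℓ-1)} (ℓ-j)! · b_{j,ℓ} satisfy the closed formula b_{s,ℓ} = (ℓ-1+s)! / (2^s · (ℓ-1-s)! · s!). -/
/-!
Since `(ℓ - j)! * closedForm ℓ j = (ℓ - j) (ℓ - 1 + j)! / (2^j j!)`, the sums in the recursion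
telescope to `(ℓ + s)! / (2^s s!)`. Hence `closedForm` satisfies the recursion, and induction
on `ℓ` identifies `b` with it.
-/

open Finset Nat

def closedForm (k s : ℕ) : ℚ := (k - 1 + s)! / (2 ^ s * (k - 1 - s)! * s !)

theorem sum_range_factorial_div_two_pow (m s : ℕ) :
    ∑ j ∈ range (s + 1), ((m : ℚ) + 1 - j) * (m + j)! / (2 ^ j * j !) =
      (m + 1 + s)! / (2 ^ s * s !) := by
  induction s with
  | zero => simp [factorial_succ]
  | succ s ih =>
    rw [sum_range_succ, ih, show m + 1 + (s + 1) = m + 1 + s + 1 by omega,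
      show m + (s + 1) = m + 1 + s by omega, factorial_succ (m + 1 + s), factorial_succ s]
    push_cast
    field_simp
    ring

theorem factorial_mul_closedForm {m j : ℕ} (hj : j ≤ m) :
    (m + 1 - j)! * closedForm (m + 1) j = ((m : ℚ) + 1 - j) * (m + j)! / (2 ^ j * j !) := by
  rw [closedForm, show m + 1 - j = m - j + 1 by omega, factorial_succ, Nat.add_sub_cancel]
  have := factorial_ne_zero (m - j)
  push_cast [hj]
  field_simp
  ring

theorem closedForm_recursion {m s : ℕ} (hs : s ≤ m + 1) :
    1 / ((m + 1 - s)! : ℚ) * ∑ j ∈ range (min s m + 1), (m + 1 - j)! * closedForm (m + 1) j =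
      closedForm (m + 2) s := by
  have hsum : ∑ j ∈ range (min s m + 1), (m + 1 - j)! * closedForm (m + 1) j =
      (m + 1 + s)! / (2 ^ s * s !) := by
    rw [sum_congr rfl fun j hj => factorial_mul_closedForm (by grind),
      sum_range_factorial_div_two_pow]
    rcases hs.lt_or_eq with hs | rfl
    · rw [min_eq_left (by omega)]
    · -- the sum up to `m + 1` has the same value: its term `j = m + 1` vanishes
      rw [min_eq_right (by omega), ← sum_range_factorial_div_two_pow,
        ← sum_range_factorial_div_two_pow, sum_range_succ _ (m + 1)]
      simp
  rw [hsum, closedForm, show m + 2 - 1 = m + 1 by omega]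
  field_simp

/-- The numbers `b s ℓ` defined by the recursion `b 0 1 = 1`,
`b s (ℓ+1) = (1/(ℓ-s)!) ∑_{j=0}^{min s (ℓ-1)} (ℓ-j)! b j ℓ`
satisfy `b s k = (k-1+s)! / (2^s (k-1-s)! s!)` for `0 ≤ s < k`. -/
theorem stmt_0 (b : ℕ → ℕ → ℚ)
    (h1 : b 0 1 = 1)
    (hrec : ∀ ℓ s : ℕ, 1 ≤ ℓ → s ≤ ℓ →
      b s (ℓ + 1) = (1 / (Nat.factorial (ℓ - s) : ℚ)) *
        ∑ j ∈ Finset.range (min s (ℓ - 1) + 1),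
          (Nat.factorial (ℓ - j) : ℚ) * b j ℓ) :
    ∀ k s : ℕ, 1 ≤ k → s < k →
      b s k = (Nat.factorial (k - 1 + s) : ℚ) /
        (2 ^ s * (Nat.factorial (k - 1 - s) : ℚ) * (Nat.factorial s : ℚ)) := by
  suffices h : ∀ m s, s ≤ m → b s (m + 1) = closedForm (m + 1) s by
    intro k s hk hs
    obtain ⟨m, rfl⟩ := Nat.exists_eq_add_of_le' hk
    exact h m s (by omega)
  intro m
  induction m with
  | zero =>
    intro s hs
    obtain rfl := Nat.le_zero.mp hs
    simp [h1, closedForm]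
  | succ m ih =>
    intro s hs
    rw [hrec (m + 1) s (by omega) hs, Nat.add_sub_cancel,
      sum_congr rfl fun j hj => by rw [ih j (by grind)]]
    exact closedForm_recursion hs
end

section
/- For every integer k ≥ 1, every real number x, and every integer j with 1 ≤ j ≤ k, the identity Σ_{i=0}^{k-1} x^i · (2k-j)_{k-i} · (k-1+i)!/((k-1-i)!·i!) = ((j-1)!·(2k-j)!/(k-1)!) · Σ_{ℓ=0}^{j-1} C(k-1,ℓ)·C(k-1,j-1-ℓ)·x^ℓ·(1+x)^{k-1-ℓ} holds, where (m)_n denotes the falling factorial and C(a,b) the binomial coefficient. -/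
/-!
Write `k = n + 1` and `j = s + 1`. Each summand on the left is
`s! (2n+1-s)! / n!` times `xⁱ C(n,i) C(n+i,s)`, because `(2n+1-s)_{n+1-i}` and `(n+i)!` share
the factor `(n+i-s)!` after completing both to full factorials. Vandermonde splits
`C(n+i,s) = ∑_{a+b=s} C(i,a) C(n,b)`, and `∑ᵢ xⁱ C(n,i) C(i,a) = C(n,a) xᵃ (1+x)^(n-a)`
by `C(n,i) C(i,a) = C(n,a) C(n-a,i-a)` and the binomial theorem.
-/

open Finset Nat

theorem sum_pow_mul_choose_mul_choose {R : Type*} [CommSemiring R] (x : R) (n l : ℕ) :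
    ∑ i ∈ range (n + 1), x ^ i * n.choose i * i.choose l
      = n.choose l * x ^ l * (1 + x) ^ (n - l) := by
  obtain hl | hl := le_or_gt l n
  · rw [show n + 1 = l + (n - l + 1) by omega, sum_range_add,
      sum_eq_zero fun i hi => by simp [choose_eq_zero_of_lt (mem_range.1 hi)], zero_add,
      add_comm 1 x, add_pow, mul_sum]
    refine sum_congr rfl fun t _ => ?_
    have hchoose : (n.choose (l + t) : R) * (l + t).choose l = n.choose l * (n - l).choose t := by
      have h := choose_mul (n := n) (le_add_right l t)
      rw [Nat.add_sub_cancel_left] at h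
      rw [← cast_mul, h, cast_mul]
    calc x ^ (l + t) * n.choose (l + t) * (l + t).choose l
        = x ^ l * x ^ t * (n.choose (l + t) * (l + t).choose l : R) := by ring
      _ = _ := by rw [hchoose, one_pow]; ring
  · rw [choose_eq_zero_of_lt hl, sum_eq_zero fun i hi => ?_]
    · simp
    · rw [choose_eq_zero_of_lt (lt_of_le_of_lt (mem_range_succ_iff.1 hi) hl)]
      simp

theorem sum_pow_mul_choose_mul_choose_add {R : Type*} [CommSemiring R] (x : R) (n s : ℕ) :
    ∑ i ∈ range (n + 1), x ^ i * n.choose i * (n + i).choose s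
      = ∑ p ∈ antidiagonal s, n.choose p.1 * n.choose p.2 * x ^ p.1 * (1 + x) ^ (n - p.1) := by
  have hvandermonde (i : ℕ) :
      ((n + i).choose s : R) = ∑ p ∈ antidiagonal s, (i.choose p.1 * n.choose p.2 : R) := by
    rw [Nat.add_comm, add_choose_eq]
    push_cast
    rfl
  simp_rw [hvandermonde, mul_sum]
  rw [sum_comm]
  refine sum_congr rfl fun p _ => ?_
  calc ∑ i ∈ range (n + 1), x ^ i * n.choose i * (i.choose p.1 * n.choose p.2)
      = (∑ i ∈ range (n + 1), x ^ i * n.choose i * i.choose p.1) * n.choose p.2 := by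
        rw [sum_mul]; exact sum_congr rfl fun i _ => by ring
    _ = _ := by rw [sum_pow_mul_choose_mul_choose]; ring

theorem descFactorial_mul_factorial_eq {m d p s : ℕ} (hd : d ≤ m) (hs : s ≤ p)
    (h : m - d = p - s) : m.descFactorial d * p ! = m ! * p.choose s * s ! := by
  apply Nat.eq_of_mul_eq_mul_right (factorial_pos (m - d))
  calc m.descFactorial d * p ! * (m - d)! = (m - d)! * m.descFactorial d * p ! := by ring
    _ = m ! * (p.choose s * s ! * (p - s)!) := by
        rw [factorial_mul_descFactorial hd, choose_mul_factorial_mul_factorial hs]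
    _ = m ! * p.choose s * s ! * (m - d)! := by rw [h]; ring

theorem descFactorial_mul_factorial_div_eq {K : Type*} [Field K] [CharZero K] {n s i : ℕ}
    (hs : s ≤ n) (hi : i ≤ n) :
    ((2 * n + 1 - s).descFactorial (n + 1 - i) : K) * (n + i)! / ((n - i)! * i !)
      = s ! * (2 * n + 1 - s)! / n ! * (n.choose i * (n + i).choose s) := by
  have hdesc : ((2 * n + 1 - s).descFactorial (n + 1 - i) : K) * (n + i)!
      = (2 * n + 1 - s)! * (n + i).choose s * s ! := by
    exact_mod_cast descFactorial_mul_factorial_eq (by omega) (by omega) (by omega)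
  have hfact : (n ! : K) = n.choose i * i ! * (n - i)! := by
    exact_mod_cast (choose_mul_factorial_mul_factorial hi).symm
  have hchoose : (n.choose i : K) ≠ 0 := by exact_mod_cast (choose_pos hi).ne'
  rw [hdesc, hfact]
  field_simp

/-- For `k ≥ 1`, `x ∈ ℝ`, `1 ≤ j ≤ k`:
`∑_{i=0}^{k-1} x^i (2k-j)_{k-i} (k-1+i)!/((k-1-i)! i!)
 = ((j-1)!(2k-j)!/(k-1)!) ∑_{ℓ=0}^{j-1} C(k-1,ℓ) C(k-1,j-1-ℓ) x^ℓ (1+x)^{k-1-ℓ}`. -/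
theorem stmt_2 (k : ℕ) (hk : 1 ≤ k) (x : ℝ) (j : ℕ) (hj1 : 1 ≤ j) (hj2 : j ≤ k) :
    ∑ i ∈ Finset.range k,
      x ^ i * (Nat.descFactorial (2 * k - j) (k - i) : ℝ) *
        (Nat.factorial (k - 1 + i) : ℝ) /
          ((Nat.factorial (k - 1 - i) : ℝ) * (Nat.factorial i : ℝ))
    = ((Nat.factorial (j - 1) : ℝ) * (Nat.factorial (2 * k - j) : ℝ) /
        (Nat.factorial (k - 1) : ℝ)) *
      ∑ l ∈ Finset.range j,
        (Nat.choose (k - 1) l : ℝ) * (Nat.choose (k - 1) (j - 1 - l) : ℝ) *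
          x ^ l * (1 + x) ^ (k - 1 - l) := by
  obtain ⟨n, rfl⟩ : ∃ n, k = n + 1 := ⟨k - 1, by omega⟩
  obtain ⟨s, rfl⟩ : ∃ s, j = s + 1 := ⟨j - 1, by omega⟩
  simp only [show 2 * (n + 1) - (s + 1) = 2 * n + 1 - s by omega, Nat.add_sub_cancel]
  rw [← Nat.sum_antidiagonal_eq_sum_range_succ
      (fun a b => (n.choose a : ℝ) * n.choose b * x ^ a * (1 + x) ^ (n - a)),
    ← sum_pow_mul_choose_mul_choose_add, mul_sum]
  refine sum_congr rfl fun i hi => ?_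
  rw [mul_assoc, mul_div_assoc,
    descFactorial_mul_factorial_div_eq (by omega) (mem_range_succ_iff.1 hi)]
  ring
end

section
/- For every integer k ≥ 1 and every even integer j with k ≤ j ≤ 2k-2, the number a_{jk} = Σ_{i=(k-j)_+}^{k-1} (-1/2)^i · (j)_{k-i} · (k-1+i)!/((k-1-i)!·i!) equals zero, where (j)_n is the falling factorial and (k-j)_+ = max(k-j,0). -/
/-!
Write `b n i = (-1/2)^i (n+i)!/((n-i)! i!)` (with `n = k - 1`; these are the coefficients of
`y_n(-x)`, `y_n` the Bessel polynomial). Pascal's rule gives the recurrence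
`b (n+1) (i+1) = b n (i+1) - (n+1+i) b n i`, and together with `(x)_(m+1) = (x)_m (x - m)`
it turns `∑ᵢ b n i (x)_(n+1-i)` into `∏_{t ≤ n} (x - 2t)` by induction on `n` (the sum
telescopes). This product vanishes at every even `x = 2m` with `m ≤ n`, i.e. at every even
`j ≤ 2k - 2`.
-/

open Finset Polynomial

/-- `(-1/2)^i (n+i)! / ((n-i)! i!)`, written with `(n+i).choose (2i)` so that it vanishes for
`i > n` instead of going through truncated subtraction. -/
def besselCoeff (n i : ℕ) : ℚ :=
  (-1 / 2) ^ i * ((n + i).choose (2 * i) : ℚ) * ((2 * i).factorial : ℚ) / (i.factorial : ℚ)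

@[simp]
theorem besselCoeff_zero_right (n : ℕ) : besselCoeff n 0 = 1 := by
  simp [besselCoeff]

theorem besselCoeff_of_lt {n i : ℕ} (h : n < i) : besselCoeff n i = 0 := by
  simp [besselCoeff, Nat.choose_eq_zero_of_lt (show n + i < 2 * i by omega)]

theorem besselCoeff_succ_succ (n i : ℕ) :
    besselCoeff (n + 1) (i + 1) = besselCoeff n (i + 1) - (n + 1 + i) * besselCoeff n i := by
  have habsorb : ((n + i + 1 : ℕ) : ℚ) * (n + i).choose (2 * i) =
      (n + i + 1).choose (2 * i + 1) * (2 * i + 1 : ℕ) := by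
    exact_mod_cast Nat.add_one_mul_choose_eq (n + i) (2 * i)
  rw [besselCoeff, besselCoeff, besselCoeff, show n + 1 + (i + 1) = n + i + 1 + 1 by omega,
    show n + (i + 1) = n + i + 1 by omega, show 2 * (i + 1) = 2 * i + 1 + 1 by omega,
    Nat.choose_succ_succ', Nat.factorial_succ (2 * i + 1), Nat.factorial_succ (2 * i),
    Nat.factorial_succ i]
  push_cast at habsorb ⊢
  field_simp
  linear_combination ((i : ℚ) + 1) * (-(1 / 2 : ℚ)) ^ i * habsorb

theorem besselCoeff_eq_factorial_div {n i : ℕ} (hi : i ≤ n) :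
    besselCoeff n i =
      (-1 / 2) ^ i * ((n + i).factorial : ℚ) /
        (((n - i).factorial : ℚ) * (i.factorial : ℚ)) := by
  have hchoose := Nat.choose_mul_factorial_mul_factorial (show 2 * i ≤ n + i by omega)
  rw [show n + i - 2 * i = n - i by omega] at hchoose
  rw [besselCoeff, ← hchoose]
  push_cast
  field_simp

theorem sum_besselCoeff_mul_descPochhammer_eval (n : ℕ) (x : ℚ) :
    ∑ i ∈ range (n + 1), besselCoeff n i * (descPochhammer ℚ (n + 1 - i)).eval x =
      ∏ t ∈ range (n + 1), (x - 2 * t) := by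
  induction n with
  | zero => simp
  | succ n ih =>
    set f : ℕ → ℚ := fun i ↦ besselCoeff n i * (descPochhammer ℚ (n + 1 + 1 - i)).eval x
    have hterm : ∀ i ∈ range (n + 1),
        besselCoeff (n + 1) (i + 1) * (descPochhammer ℚ (n + 1 + 1 - (i + 1))).eval x =
          (f (i + 1) - f i) +
            (x - 2 * (n + 1 : ℕ)) *
              (besselCoeff n i * (descPochhammer ℚ (n + 1 - i)).eval x) := by
      intro i hmem
      have hi : i ≤ n := Nat.lt_succ_iff.mp (mem_range.mp hmem)
      simp only [f]
      rw [show n + 1 + 1 - i = n + 1 - i + 1 by omega,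
        show n + 1 + 1 - (i + 1) = n + 1 - i by omega, descPochhammer_succ_eval,
        besselCoeff_succ_succ, Nat.cast_sub (by omega)]
      push_cast
      ring
    rw [prod_range_succ, ← ih, sum_range_succ', sum_congr rfl hterm, sum_add_distrib,
      sum_range_sub f, ← mul_sum]
    simp only [f, besselCoeff_of_lt (Nat.lt_succ_self n), besselCoeff_zero_right,
      Nat.sub_zero]
    ring

theorem sum_Icc_descFactorial_mul_factorial_div_eq_prod (n j : ℕ) :
    ∑ i ∈ Icc (n + 1 - j) n,
      (-(1 : ℚ) / 2) ^ i * (j.descFactorial (n + 1 - i) : ℚ) * ((n + i).factorial : ℚ) /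
        (((n - i).factorial : ℚ) * (i.factorial : ℚ)) =
      ∏ t ∈ range (n + 1), ((j : ℚ) - 2 * t) := by
  rw [← sum_besselCoeff_mul_descPochhammer_eval]
  apply sum_subset_zero_on_sdiff
  · intro i hi
    simp only [mem_Icc, mem_range] at hi ⊢
    omega
  · intro i hi
    simp only [mem_sdiff, mem_Icc, mem_range] at hi
    rw [descPochhammer_eval_eq_descFactorial, Nat.descFactorial_eq_zero_iff_lt.mpr (by omega)]
    simp
  · intro i hi
    rw [besselCoeff_eq_factorial_div (mem_Icc.mp hi).2, descPochhammer_eval_eq_descFactorial]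
    ring

theorem stmt_4_general (k j : ℕ) (hk : 1 ≤ k) (hj : j ≤ 2 * k - 2) (hje : Even j) :
    ∑ i ∈ Finset.Icc (k - j) (k - 1),
      (-(1 : ℚ) / 2) ^ i * (Nat.descFactorial j (k - i) : ℚ) *
        (Nat.factorial (k - 1 + i) : ℚ) /
          ((Nat.factorial (k - 1 - i) : ℚ) * (Nat.factorial i : ℚ)) = 0 := by
  obtain ⟨n, rfl⟩ : ∃ n, k = n + 1 := ⟨k - 1, by omega⟩
  obtain ⟨m, rfl⟩ := hje
  rw [Nat.add_sub_cancel, sum_Icc_descFactorial_mul_factorial_div_eq_prod]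
  refine prod_eq_zero (mem_range.mpr (show m < n + 1 by omega)) ?_
  push_cast
  ring

/-- For `k ≥ 1` and even `j` with `k ≤ j ≤ 2k-2`,
`a_{jk} = ∑_{i=(k-j)_+}^{k-1} (-1/2)^i (j)_{k-i} (k-1+i)!/((k-1-i)! i!) = 0`.
(Natural subtraction `k - j` realizes `(k-j)_+ = max(k-j,0)`.) -/
theorem stmt_4 (k j : ℕ) (hk : 1 ≤ k) (hkj : k ≤ j) (hj : j ≤ 2 * k - 2) (hje : Even j) :
    ∑ i ∈ Finset.Icc (k - j) (k - 1),
      (-(1 : ℚ) / 2) ^ i * (Nat.descFactorial j (k - i) : ℚ) *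
        (Nat.factorial (k - 1 + i) : ℚ) /
          ((Nat.factorial (k - 1 - i) : ℚ) * (Nat.factorial i : ℚ)) = 0 :=
  stmt_4_general k j hk hj hje
end

section
/- For every integer k ≥ 1 and every even integer j with 2 ≤ j ≤ k-1, the number a_{jk} = Σ_{i=k-j}^{k-1} (-1/2)^i · (j)_{k-i} · (k-1+i)!/((k-1-i)!·i!) equals zero. -/
/-
Put `k = n + 1`, `j = p + 1` (so `p` is odd) and `i = n - m`. Up to the factor
`(-1/2)^n j n!`, the sum becomes `∑ₘ (-2)^m C(p, m) C(2n - m, n)`, the coefficient of `X^n` in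
`(1 - X)^p (1 + X)^(2n - p) = ∑ₘ C(p, m) (-2X)^m (1 + X)^(2n - m)`. Reversing the coefficients of
this polynomial of degree `2n` multiplies it by `(-1)^p = -1`, so its middle coefficient vanishes.
-/

open Polynomial Finset Nat

namespace Polynomial

section CommSemiring

variable {R : Type*} [CommSemiring R]

theorem reflect_pow {f : R[X]} {N : ℕ} (hf : f.natDegree ≤ N) (n : ℕ) :
    reflect (N * n) (f ^ n) = reflect N f ^ n := by
  induction n with
  | zero => simp
  | succ n ih =>
    have hfn : (f ^ n).natDegree ≤ N * n :=
      natDegree_pow_le.trans (by rw [mul_comm N]; exact Nat.mul_le_mul_left n hf)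
    rw [pow_succ, Nat.mul_succ, reflect_mul _ _ hfn hf, ih, pow_succ]

theorem reflect_one_add_X_pow (n : ℕ) : reflect n ((1 + X : R[X]) ^ n) = (1 + X) ^ n := by
  have h := reflect_pow (f := (1 + X : R[X])) (N := 1) (by compute_degree!) n
  rwa [one_mul, reflect_add, reflect_one, reflect_one_X, pow_one, add_comm X] at h

end CommSemiring

variable {R : Type*} [CommRing R]

theorem reflect_one_sub_X_pow (n : ℕ) : reflect n ((1 - X : R[X]) ^ n) = (X - 1) ^ n := by
  have h := reflect_pow (f := (1 - X : R[X])) (N := 1) (by compute_degree!) n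
  rwa [one_mul, reflect_sub, reflect_one, reflect_one_X, pow_one] at h

theorem coeff_one_sub_X_pow_mul_one_add_X_pow_of_odd [NoZeroDivisors R] [CharZero R]
    {p q n : ℕ} (hp : Odd p) (hpq : p + q = 2 * n) :
    ((1 - X : R[X]) ^ p * (1 + X) ^ q).coeff n = 0 := by
  set f : R[X] := (1 - X) ^ p * (1 + X) ^ q
  have hf : reflect (2 * n) f = -f := by
    rw [← hpq, reflect_mul _ _ (by compute_degree!) (by compute_degree!), reflect_one_sub_X_pow,
      reflect_one_add_X_pow, ← neg_sub, hp.neg_pow, neg_mul]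
  have h := congrArg (coeff · n) hf
  simp only [coeff_reflect, revAt_le (by omega : n ≤ 2 * n), coeff_neg,
    show 2 * n - n = n by omega] at h
  exact self_eq_neg.mp h

theorem one_sub_X_pow_mul_one_add_X_pow_eq_sum {p q : ℕ} :
    (1 - X : R[X]) ^ p * (1 + X) ^ q =
      ∑ m ∈ range (p + 1), C ((-2 : R) ^ m * p.choose m) * (X ^ m * (1 + X) ^ (p + q - m)) := by
  rw [show (1 - X : R[X]) = -2 * X + (1 + X) by ring, add_pow, sum_mul]
  refine sum_congr rfl fun m hm => ?_
  rw [show p + q - m = p - m + q by have := mem_range.mp hm; omega, pow_add]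
  simp only [map_mul, map_pow, map_neg, map_ofNat, map_natCast]
  ring

end Polynomial

theorem sum_neg_two_pow_mul_choose_mul_choose_eq_zero {R : Type*} [CommRing R] [NoZeroDivisors R]
    [CharZero R] {p n : ℕ} (hp : Odd p) (hpn : p ≤ 2 * n) :
    ∑ m ∈ range (p + 1), (-2 : R) ^ m * p.choose m * (2 * n - m).choose n = 0 := by
  rw [← coeff_one_sub_X_pow_mul_one_add_X_pow_of_odd (R := R) hp (Nat.add_sub_cancel' hpn),
    one_sub_X_pow_mul_one_add_X_pow_eq_sum, Nat.add_sub_cancel' hpn, finsetSum_coeff]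
  refine sum_congr rfl fun m hm => ?_
  have hmp := mem_range.mp hm
  rw [coeff_C_mul, coeff_X_pow_mul', coeff_one_add_X_pow]
  split_ifs with hmn
  · rw [← Nat.choose_symm (by omega : n - m ≤ 2 * n - m), show 2 * n - m - (n - m) = n by omega]
  · simp [Nat.choose_eq_zero_of_lt (by omega : 2 * n - m < n)]

def aTerm (k j i : ℕ) : ℚ :=
  (-(1 : ℚ) / 2) ^ i * (j.descFactorial (k - i) : ℚ) * ((k - 1 + i)! : ℚ) /
    (((k - 1 - i)! : ℚ) * (i ! : ℚ))

theorem aTerm_succ_succ_sub (n p m : ℕ) (hm : m ≤ n) :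
    aTerm (n + 1) (p + 1) (n - m) =
      (-(1 : ℚ) / 2) ^ n * (p + 1) * n ! * ((-2) ^ m * p.choose m * (2 * n - m).choose n) := by
  have hdesc : ((p + 1).descFactorial (m + 1) : ℚ) = (p + 1) * m ! * p.choose m := by
    rw [succ_descFactorial_succ, descFactorial_eq_factorial_mul_choose]
    push_cast
    ring
  have hfact : ((2 * n - m)! : ℚ) = (2 * n - m).choose n * n ! * (n - m)! := by
    rw [← show 2 * n - m - n = n - m by omega]
    exact_mod_cast (choose_mul_factorial_mul_factorial (by omega)).symm
  have hpow : (-(1 : ℚ) / 2) ^ (n - m) = (-(1 : ℚ) / 2) ^ n * (-2) ^ m := by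
    rw [← Nat.sub_add_cancel hm, pow_add, Nat.add_sub_cancel, mul_assoc, ← mul_pow]
    norm_num
  rw [aTerm, show n + 1 - (n - m) = m + 1 by omega, Nat.add_sub_cancel,
    show n + (n - m) = 2 * n - m by omega, show n - (n - m) = m by omega, hdesc, hfact, hpow]
  field_simp

theorem stmt_5_general (k j : ℕ) (hj2 : 2 ≤ j) (hj : j ≤ k - 1) (hje : Even j) :
    ∑ i ∈ Finset.Icc (k - j) (k - 1),
      (-(1 : ℚ) / 2) ^ i * (Nat.descFactorial j (k - i) : ℚ) *
        (Nat.factorial (k - 1 + i) : ℚ) /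
          ((Nat.factorial (k - 1 - i) : ℚ) * (Nat.factorial i : ℚ)) = 0 := by
  show ∑ i ∈ Icc (k - j) (k - 1), aTerm k j i = 0
  obtain ⟨n, rfl⟩ : ∃ n, k = n + 1 := ⟨k - 1, by omega⟩
  obtain ⟨p, rfl⟩ : ∃ p, j = p + 1 := ⟨j - 1, by omega⟩
  have hp : Odd p := Nat.not_even_iff_odd.mp (Nat.even_add_one.mp hje)
  rw [Nat.add_sub_cancel] at hj ⊢
  calc _ = ∑ m ∈ range (p + 1), (-(1 : ℚ) / 2) ^ n * (p + 1) * n ! *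
        ((-2) ^ m * p.choose m * (2 * n - m).choose n) := by
        refine sum_nbij' (n - ·) (n - ·) ?_ ?_ ?_ ?_ ?_ <;> intro i hi <;>
          simp only [mem_Icc, mem_range] at hi ⊢
        any_goals omega
        obtain ⟨m, hmn, rfl⟩ : ∃ m ≤ n, i = n - m := ⟨n - i, by omega, by omega⟩
        rw [Nat.sub_sub_self hmn]
        exact aTerm_succ_succ_sub n p m hmn
    _ = 0 := by
        rw [← mul_sum, sum_neg_two_pow_mul_choose_mul_choose_eq_zero hp (by omega), mul_zero]

/-- For `k ≥ 1` and even `j` with `2 ≤ j ≤ k-1`,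
`a_{jk} = ∑_{i=k-j}^{k-1} (-1/2)^i (j)_{k-i} (k-1+i)!/((k-1-i)! i!) = 0`. -/
theorem stmt_5 (k j : ℕ) (hk : 1 ≤ k) (hj2 : 2 ≤ j) (hj : j ≤ k - 1) (hje : Even j) :
    ∑ i ∈ Finset.Icc (k - j) (k - 1),
      (-(1 : ℚ) / 2) ^ i * (Nat.descFactorial j (k - i) : ℚ) *
        (Nat.factorial (k - 1 + i) : ℚ) /
          ((Nat.factorial (k - 1 - i) : ℚ) * (Nat.factorial i : ℚ)) = 0 :=
  stmt_5_general k j hj2 hj hje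
end

section
/- For every integer k ≥ 1, the number a_{2k-1,k} = Σ_{i=0}^{k-1} (-1/2)^i · (2k-1)_{k-i} · (k-1+i)!/((k-1-i)!·i!) equals (2k-1)!/(2^{k-1}·(k-1)!), and in particular is nonzero. -/
/-!
Since `(2m+1)_{m+1-i} · (m+i)! = (2m+1)!` and `m! / ((m-i)! i!) = C(m,i)`, the `i`-th summand of
`a_{2m+1,m+1}` is `(2m+1)!/m! · C(m,i) (-1/2)^i`, so by the binomial theorem the sum is
`(2m+1)!/m! · (1 - 1/2)^m`.
-/

open Finset Nat

lemma Nat.factorial_add_mul_descFactorial {m i : ℕ} (hi : i ≤ m) :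
    (m + i)! * (2 * m + 1).descFactorial (m + 1 - i) = (2 * m + 1)! := by
  have := Nat.factorial_mul_descFactorial (show m + 1 - i ≤ 2 * m + 1 by omega)
  rwa [show 2 * m + 1 - (m + 1 - i) = m + i by omega] at this

lemma descFactorial_mul_factorial_div_eq_choose {K : Type*} [Field K] [CharZero K] {m i : ℕ}
    (hi : i ≤ m) :
    ((2 * m + 1).descFactorial (m + 1 - i) : K) * (m + i)! / ((m - i)! * i !) =
      (2 * m + 1)! / m ! * m.choose i := by
  have key : ((m + i)! : K) * (2 * m + 1).descFactorial (m + 1 - i) = (2 * m + 1)! := by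
    exact_mod_cast Nat.factorial_add_mul_descFactorial hi
  have : (m ! : K) ≠ 0 := Nat.cast_ne_zero.mpr m.factorial_ne_zero
  rw [Nat.cast_choose K hi, ← key]
  field_simp

lemma sum_range_pow_mul_choose {R : Type*} [CommSemiring R] (x : R) (m : ℕ) :
    ∑ i ∈ range (m + 1), x ^ i * m.choose i = (x + 1) ^ m := by
  simp [add_pow]

lemma sum_neg_half_pow_mul_descFactorial (m : ℕ) :
    ∑ i ∈ range (m + 1),
        (-(1 : ℚ) / 2) ^ i * ((2 * m + 1).descFactorial (m + 1 - i) : ℚ) * ((m + i)! : ℚ) /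
          (((m - i)! : ℚ) * (i ! : ℚ)) =
      ((2 * m + 1)! : ℚ) / (2 ^ m * (m ! : ℚ)) := by
  calc _ = ∑ i ∈ range (m + 1), ((2 * m + 1)! : ℚ) / m ! * ((-(1 : ℚ) / 2) ^ i * m.choose i) := by
        refine sum_congr rfl fun i hi => ?_
        rw [mul_assoc, mul_div_assoc,
          descFactorial_mul_factorial_div_eq_choose (Nat.lt_succ_iff.mp (mem_range.mp hi))]
        ring
    _ = ((2 * m + 1)! : ℚ) / m ! * (1 / 2) ^ m := by
        rw [← mul_sum, sum_range_pow_mul_choose]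
        norm_num
    _ = _ := by
        rw [one_div_pow]
        field_simp

/-- For `k ≥ 1`,
`a_{2k-1,k} = ∑_{i=0}^{k-1} (-1/2)^i (2k-1)_{k-i} (k-1+i)!/((k-1-i)! i!)
 = (2k-1)!/(2^{k-1}(k-1)!) ≠ 0`. -/
theorem stmt_6 (k : ℕ) (hk : 1 ≤ k) :
    (∑ i ∈ Finset.range k,
        (-(1 : ℚ) / 2) ^ i * (Nat.descFactorial (2 * k - 1) (k - i) : ℚ) *
          (Nat.factorial (k - 1 + i) : ℚ) /
            ((Nat.factorial (k - 1 - i) : ℚ) * (Nat.factorial i : ℚ))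
      = (Nat.factorial (2 * k - 1) : ℚ) / (2 ^ (k - 1) * (Nat.factorial (k - 1) : ℚ)))
    ∧ ∑ i ∈ Finset.range k,
        (-(1 : ℚ) / 2) ^ i * (Nat.descFactorial (2 * k - 1) (k - i) : ℚ) *
          (Nat.factorial (k - 1 + i) : ℚ) /
            ((Nat.factorial (k - 1 - i) : ℚ) * (Nat.factorial i : ℚ)) ≠ 0 := by
  obtain ⟨m, rfl⟩ : ∃ m, k = m + 1 := ⟨k - 1, by omega⟩
  have eq := sum_neg_half_pow_mul_descFactorial m
  simp only [show 2 * (m + 1) - 1 = 2 * m + 1 by omega, Nat.add_sub_cancel]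
  exact ⟨eq, eq ▸ by positivity⟩
end

section
/- Let R be a commutative ring containing ℚ, c ∈ R, and ∂ the R-derivation of R[λ,λ^{-1}] with ∂λ = c. For integers k ≥ 1 and j ≥ 1, Σ_{i=0}^{k-1} (-1)^i b_{ik} c^i λ^{-(k+i)} ∂^{k-i}(λ^j) = c^k λ^{j-2k} Σ_{i=(k-j)_+}^{k-1} (-1)^i (j)_{k-i} b_{ik}, where b_{ik} = (k-1+i)!/(2^i (k-1-i)! i!). -/
open LaurentPolynomial in
lemma iterD {R : Type*} [CommRing R]
    (c : R) (D : Derivation R (LaurentPolynomial R) (LaurentPolynomial R))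
    (hD : D (T 1) = C c) (n m : ℕ) :
    (⇑D)^[n] (T (m:ℤ)) = C ((m.descFactorial n : R)) * ((C c)^n * T ((m:ℤ) - n)) := by
  induction n with
  | zero => simp
  | succ n ih =>
    rw [Function.iterate_succ_apply', ih]
    have hsm : ∀ (d : R) (t : ℤ), C d * ((C c) ^ n * T t) = (d * c^n) • T t := by
      intro d t
      rw [Algebra.smul_def, ← C_eq_algebraMap, map_mul, map_pow, mul_assoc]
    rw [hsm, Derivation.map_smul]
    rcases lt_or_ge n m with h | h
    · have hT1 : T ((m:ℤ) - n) = (T 1 : LaurentPolynomial R) ^ (m - n) := by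
        rw [T_pow, mul_one]; congr 1; push_cast; omega
      rw [hT1, Derivation.leibniz_pow, hD, T_pow, mul_one]
      have he : ((m - n - 1 : ℕ) : ℤ) = (m:ℤ) - (n+1) := by push_cast; omega
      rw [he]
      have hd : (m.descFactorial (n+1) : R) = (m.descFactorial n : R) * ((m - n : ℕ) : R) := by
        rw [Nat.descFactorial_succ]; push_cast; ring
      rw [hd, Algebra.smul_def, ← C_eq_algebraMap, nsmul_eq_mul, smul_eq_mul]
      rw [map_mul, ← map_natCast (C : R →+* LaurentPolynomial R) (m - n)]
      push_cast
      rw [map_mul, map_pow]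
      ring
    · have h1 : (m.descFactorial (n+1) : R) = 0 := by
        rw [Nat.descFactorial_eq_zero_iff_lt.mpr (by omega)]; push_cast; ring
      rcases h.lt_or_eq with h2 | h2
      · have h0 : (m.descFactorial n : R) = 0 := by
          rw [Nat.descFactorial_eq_zero_iff_lt.mpr h2]; push_cast; ring
        simp [h0, h1]
      · subst h2
        rw [sub_self, T_zero, show D (1 : LaurentPolynomial R) = 0 from Derivation.map_one_eq_zero D]
        simp [h1]

/-- Let `R` be a commutative ring containing ℚ, `c ∈ R`, and `D` the `R`-derivation of
`R[λ,λ⁻¹]` with `D λ = c`.  For `k ≥ 1` and `j ≥ 1`, with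
`b_{ik} = (k-1+i)!/(2^i (k-1-i)! i!)`:
`∑_{i=0}^{k-1} (-1)^i b_{ik} c^i λ^{-(k+i)} D^{k-i}(λ^j)
  = c^k λ^{j-2k} ∑_{i=(k-j)_+}^{k-1} (-1)^i (j)_{k-i} b_{ik}`. -/
theorem stmt_11 {R : Type*} [CommRing R] [Algebra ℚ R]
    (c : R) (D : Derivation R (LaurentPolynomial R) (LaurentPolynomial R))
    (hD : D (LaurentPolynomial.T 1) = LaurentPolynomial.C c)
    (k j : ℕ) (hk : 1 ≤ k) (hj : 1 ≤ j) :
    ∑ i ∈ Finset.range k,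
      (-1 : LaurentPolynomial R) ^ i *
        LaurentPolynomial.C (algebraMap ℚ R
          ((Nat.factorial (k - 1 + i) : ℚ) /
            (2 ^ i * (Nat.factorial (k - 1 - i) : ℚ) * (Nat.factorial i : ℚ)))) *
        (LaurentPolynomial.C c) ^ i *
        LaurentPolynomial.T (-((k : ℤ) + (i : ℤ))) *
        (⇑D)^[k - i] (LaurentPolynomial.T (j : ℤ))
    = (LaurentPolynomial.C c) ^ k * LaurentPolynomial.T ((j : ℤ) - 2 * (k : ℤ)) *
        LaurentPolynomial.C (algebraMap ℚ R
          (∑ i ∈ Finset.Icc (k - j) (k - 1),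
            (-1 : ℚ) ^ i * (Nat.descFactorial j (k - i) : ℚ) *
              ((Nat.factorial (k - 1 + i) : ℚ) /
                (2 ^ i * (Nat.factorial (k - 1 - i) : ℚ) * (Nat.factorial i : ℚ))))) := by
  open LaurentPolynomial in
  let bq : ℕ → ℚ := fun i => ((Nat.factorial (k - 1 + i) : ℚ) /
      (2 ^ i * (Nat.factorial (k - 1 - i) : ℚ) * (Nat.factorial i : ℚ)))
  have hsub : Finset.Icc (k - j) (k - 1) ⊆ Finset.range k := by
    intro i hi
    rw [Finset.mem_Icc] at hi
    rw [Finset.mem_range]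
    omega
  have hzero : ∀ i ∈ Finset.range k, i ∉ Finset.Icc (k - j) (k - 1) →
      (-1 : ℚ) ^ i * (Nat.descFactorial j (k - i) : ℚ) * bq i = 0 := by
    intro i hi hni
    rw [Finset.mem_range] at hi
    rw [Finset.mem_Icc] at hni
    have : j < k - i := by omega
    rw [Nat.descFactorial_eq_zero_iff_lt.mpr this]
    push_cast
    ring
  have hsum : (∑ i ∈ Finset.Icc (k - j) (k - 1),
      (-1 : ℚ) ^ i * (Nat.descFactorial j (k - i) : ℚ) * bq i)
      = ∑ i ∈ Finset.range k,
        (-1 : ℚ) ^ i * (Nat.descFactorial j (k - i) : ℚ) * bq i :=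
    Finset.sum_subset hsub hzero
  rw [show (∑ i ∈ Finset.Icc (k - j) (k - 1),
      (-1 : ℚ) ^ i * (Nat.descFactorial j (k - i) : ℚ) *
        ((Nat.factorial (k - 1 + i) : ℚ) /
          (2 ^ i * (Nat.factorial (k - 1 - i) : ℚ) * (Nat.factorial i : ℚ)))) =
      ∑ i ∈ Finset.range k,
        (-1 : ℚ) ^ i * (Nat.descFactorial j (k - i) : ℚ) * bq i from hsum,
    map_sum, map_sum, Finset.mul_sum]
  refine Finset.sum_congr rfl fun i hi => ?_
  have hik : i < k := Finset.mem_range.mp hi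
  rw [iterD c D hD]
  have hpow : (C c : LaurentPolynomial R) ^ i * (C c) ^ (k - i) = (C c) ^ k := by
    rw [← pow_add]
    congr 1
    omega
  have hT : (T (-((k:ℤ) + (i:ℤ))) : LaurentPolynomial R) * T ((j:ℤ) - ((k - i : ℕ):ℤ))
      = T ((j:ℤ) - 2 * (k:ℤ)) := by
    rw [← T_add]
    congr 1
    push_cast [Nat.cast_sub hik.le]
    ring
  have hC : (C (algebraMap ℚ R ((-1:ℚ)^i * (Nat.descFactorial j (k - i) : ℚ) * bq i))
        : LaurentPolynomial R)
      = (-1 : LaurentPolynomial R)^i * C ((Nat.descFactorial j (k - i) : R))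
          * C (algebraMap ℚ R (bq i)) := by
    simp only [map_mul, map_pow, map_neg, map_one, map_natCast]
  rw [hC, ← hpow, ← hT]
  ring
end

section
/- Let (g,k) be a reductive symmetric superpair with involution θ and even Cartan subspace 𝔞, and let λ be a restricted root with restricted root space g_{1,𝔞}^λ in the odd part. Then the odd multiplicity m_{1,λ} = dim g_{1,𝔞}^λ is even, and the form b^θ(x,y) = b(x,θy) restricts to a symplectic (nondegenerate alternating) form on the projections k₁^λ and p₁^λ of g₁(λ) = g_{1,𝔞}^λ ⊕ g_{1,𝔞}^{-λ} onto the ±1 eigenspaces of θ. -/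
/-!
An invariant form pairs weight vectors of `ad 𝔞` only for opposite weights, since
`b([a,x],y) = b(x,[a,y])` gives `(μ + ν)(a) b(x,y) = 0`; and `θ` exchanges `g^μ` and `g^{-μ}`
because `θ = -1` on `𝔞`. So `b` is nondegenerate on the `θ`-stable space
`g₁(λ) = g₁^λ ⊕ g₁^{-λ}`, and `bᶿ(x,y) = b(x,θy)` pairs `g₁^λ` nondegenerately with itself.
Being antisymmetric on odd vectors, `bᶿ` then forces `dim g₁^λ` to be even. Inside `g₁(λ)` the
two eigenspaces of `θ` are `b`-orthogonal, so `bᶿ = ±b` is nondegenerate on each of them.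
-/

theorem eq_zero_of_self_eq_neg {R : Type*} [Ring R] [NoZeroDivisors R] [NeZero (2 : R)] {a : R}
    (h : a = -a) : a = 0 :=
  (mul_eq_zero.mp ((two_mul a).trans (eq_neg_iff_add_eq_zero.mp h))).resolve_left two_ne_zero

namespace LinearMap

variable {K V : Type*} [Field K] [NeZero (2 : K)] [AddCommGroup V] [Module K V]

/-- The Gram matrix `M` of such a form satisfies `det M = det Mᵀ = det (-M) = (-1)ⁿ det M`. -/
theorem BilinForm.even_finrank_of_antisymm_of_nondegenerate [FiniteDimensional K V]
    (B : LinearMap.BilinForm K V) (hB : ∀ x y, B x y = -B y x) (hnd : B.Nondegenerate) :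
    Even (Module.finrank K V) := by
  by_contra hodd
  rw [Nat.not_even_iff_odd] at hodd
  let e := Module.finBasis K V
  set M := BilinForm.toMatrix e B
  have hMt : M.transpose = -M := by
    ext i j
    simp only [Matrix.transpose_apply, Matrix.neg_apply, M, BilinForm.toMatrix_apply]
    exact hB (e j) (e i)
  have hdet : M.det = -M.det := by
    calc M.det = M.transpose.det := M.det_transpose.symm
      _ = -M.det := by rw [hMt, Matrix.det_neg, Fintype.card_fin, hodd.neg_one_pow, neg_one_mul]
  exact (BilinForm.nondegenerate_iff_det_ne_zero e).mp hnd (eq_zero_of_self_eq_neg hdet)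

theorem even_finrank_of_antisymm_of_nondegenerate_on [FiniteDimensional K V]
    (B : V →ₗ[K] V →ₗ[K] K) (W : Submodule K V)
    (hB : ∀ x ∈ W, ∀ y ∈ W, B x y = -B y x) (hnd : ∀ x ∈ W, (∀ y ∈ W, B x y = 0) → x = 0) :
    Even (Module.finrank K W) := by
  have hBW : ∀ x y : W, B.domRestrict₁₂ W W x y = -B.domRestrict₁₂ W W y x :=
    fun x y ↦ hB x x.2 y y.2
  refine BilinForm.even_finrank_of_antisymm_of_nondegenerate _ hBW ?_
  refine (IsRefl.nondegenerate_iff_separatingLeft fun x y h ↦ by rw [hBW, h, neg_zero]).mpr ?_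
  exact fun x hx ↦ Subtype.ext (hnd x x.2 fun y hy ↦ hx ⟨y, hy⟩)

variable {B : V →ₗ[K] V →ₗ[K] K} {θ : V →ₗ[K] V}

theorem apply_eq_zero_of_eigen_opposite (hθB : ∀ x y, B (θ x) (θ y) = B x y) {ε : K}
    (hε : ε * ε = 1) {x y : V} (hx : θ x = ε • x) (hy : θ y = -ε • y) : B x y = 0 := by
  refine eq_zero_of_self_eq_neg ?_
  calc B x y = B (θ x) (θ y) := (hθB x y).symm
    _ = (-ε * ε) * B x y := by rw [hx, hy, map_smul, map_smul, smul_apply, smul_smul, smul_eq_mul]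
    _ = -B x y := by rw [neg_mul, hε, neg_one_mul]

/-- The `-ε`-eigenspace of `θ` is `B`-orthogonal to the `ε`-eigenspace, and `W` is their sum. -/
theorem exists_apply_map_ne_zero_of_eigen (hθ : ∀ x, θ (θ x) = x)
    (hθB : ∀ x y, B (θ x) (θ y) = B x y) {W : Submodule K V} (hθW : ∀ x ∈ W, θ x ∈ W)
    (hnd : ∀ x ∈ W, (∀ y ∈ W, B x y = 0) → x = 0) {ε : K} (hε : ε * ε = 1) {x : V}
    (hxW : x ∈ W) (hx : θ x = ε • x) (hx0 : x ≠ 0) :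
    ∃ y ∈ W, θ y = ε • y ∧ B x (θ y) ≠ 0 := by
  by_contra! h
  refine hx0 (hnd x hxW fun z hz ↦ ?_)
  set z₁ := z + ε • θ z
  set z₂ := z - ε • θ z
  have hz₁ : θ z₁ = ε • z₁ := by
    simp only [z₁, map_add, map_smul, hθ]
    linear_combination (norm := module) -hε • θ z
  have hz₂ : θ z₂ = -ε • z₂ := by
    simp only [z₂, map_sub, map_smul, hθ]
    linear_combination (norm := module) -hε • θ z
  have h₁ : B x z₁ = 0 := by
    have := h z₁ (W.add_mem hz (W.smul_mem _ (hθW z hz))) hz₁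
    rw [hz₁, map_smul, smul_eq_mul] at this
    exact (mul_eq_zero.mp this).resolve_left (left_ne_zero_of_mul_eq_one hε)
  have h₂ : B x z₂ = 0 := apply_eq_zero_of_eigen_opposite hθB hε hx hz₂
  have h2z : (2 : K) • z = z₁ + z₂ := by module
  have := congrArg (B x) h2z
  rw [map_smul, map_add, h₁, h₂, add_zero, smul_eq_zero] at this
  exact this.resolve_left two_ne_zero

theorem exists_apply_map_ne_zero_of_mem_ker_sub_id (hθ : ∀ x, θ (θ x) = x)
    (hθB : ∀ x y, B (θ x) (θ y) = B x y) {W : Submodule K V} (hθW : ∀ x ∈ W, θ x ∈ W)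
    (hnd : ∀ x ∈ W, (∀ y ∈ W, B x y = 0) → x = 0) :
    ∀ x ∈ W ⊓ ker (θ - id), x ≠ 0 → ∃ y ∈ W ⊓ ker (θ - id), B x (θ y) ≠ 0 := by
  have hmem : ∀ x, x ∈ W ⊓ ker (θ - id) ↔ x ∈ W ∧ θ x = (1 : K) • x := by
    simp [sub_eq_zero]
  intro x hx hx0
  rw [hmem] at hx
  obtain ⟨y, hyW, hy, hne⟩ := exists_apply_map_ne_zero_of_eigen hθ hθB hθW hnd (one_mul 1)
    hx.1 hx.2 hx0
  exact ⟨y, (hmem y).mpr ⟨hyW, hy⟩, hne⟩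

theorem exists_apply_map_ne_zero_of_mem_ker_add_id (hθ : ∀ x, θ (θ x) = x)
    (hθB : ∀ x y, B (θ x) (θ y) = B x y) {W : Submodule K V} (hθW : ∀ x ∈ W, θ x ∈ W)
    (hnd : ∀ x ∈ W, (∀ y ∈ W, B x y = 0) → x = 0) :
    ∀ x ∈ W ⊓ ker (θ + id), x ≠ 0 → ∃ y ∈ W ⊓ ker (θ + id), B x (θ y) ≠ 0 := by
  have hmem : ∀ x, x ∈ W ⊓ ker (θ + id) ↔ x ∈ W ∧ θ x = (-1 : K) • x := by
    simp [add_eq_zero_iff_eq_neg]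
  intro x hx hx0
  rw [hmem] at hx
  obtain ⟨y, hyW, hy, hne⟩ := exists_apply_map_ne_zero_of_eigen hθ hθB hθW hnd
    (by norm_num) hx.1 hx.2 hx0
  exact ⟨y, (hmem y).mpr ⟨hyW, hy⟩, hne⟩

end LinearMap

namespace SymmetricSuperpair

variable {K g : Type*} [Field K] [AddCommGroup g] [Module K g]

/-- The simultaneous eigenspace of `ad 𝔞` for the weight `μ`; the paper's `g_{j,𝔞}^μ` is
`gr j ⊓ rootSpace br 𝔞 μ`. -/
def rootSpace (br : g →ₗ[K] g →ₗ[K] g) (𝔞 : Submodule K g) (μ : Module.Dual K 𝔞) :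
    Submodule K g :=
  ⨅ h : 𝔞, LinearMap.ker (br h.1 - μ h • LinearMap.id)

variable {gr : ZMod 2 → Submodule K g} {br : g →ₗ[K] g →ₗ[K] g} {b : g →ₗ[K] g →ₗ[K] K}
  {θ : g →ₗ[K] g} {𝔞 : Submodule K g}

theorem mem_rootSpace {μ : Module.Dual K 𝔞} {x : g} :
    x ∈ rootSpace br 𝔞 μ ↔ ∀ a : 𝔞, br a x = μ a • x := by
  simp [rootSpace, sub_eq_zero]

theorem apply_map_eq_neg_of_odd
    (hb_symm : ∀ i j : ZMod 2, ∀ x ∈ gr i, ∀ y ∈ gr j,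
      b x y = ((-1 : K) ^ (i.val * j.val)) * b y x)
    (hθ_inv : ∀ x : g, θ (θ x) = x) (hθ_b : ∀ x y : g, b (θ x) (θ y) = b x y)
    (hθ_grade : ∀ i : ZMod 2, ∀ x ∈ gr i, θ x ∈ gr i) {x y : g} (hx : x ∈ gr 1) (hy : y ∈ gr 1) :
    b x (θ y) = -b y (θ x) := by
  calc b x (θ y) = -b (θ y) x := by
        rw [hb_symm 1 1 x hx (θ y) (hθ_grade 1 y hy),
          show (1 : ZMod 2).val * (1 : ZMod 2).val = 1 from rfl, pow_one, neg_one_mul]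
    _ = -b y (θ x) := by rw [← hθ_b y (θ x), hθ_inv]

theorem apply_eq_zero_of_add_ne_zero
    (hbr_skew : ∀ i j : ZMod 2, ∀ x ∈ gr i, ∀ y ∈ gr j,
      br x y = -(((-1 : K) ^ (i.val * j.val)) • br y x))
    (hb_inv : ∀ x y z : g, b (br x y) z = b x (br y z)) (h𝔞even : 𝔞 ≤ gr 0)
    {i : ZMod 2} {μ ν : Module.Dual K 𝔞} {x y : g} (hxi : x ∈ gr i)
    (hx : x ∈ rootSpace br 𝔞 μ) (hy : y ∈ rootSpace br 𝔞 ν) (hμν : μ + ν ≠ 0) :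
    b x y = 0 := by
  obtain ⟨a, ha⟩ : ∃ a : 𝔞, μ a + ν a ≠ 0 := by
    by_contra! h
    exact hμν (LinearMap.ext h)
  have hxa : br x a = -(μ a • x) := by
    rw [hbr_skew i 0 x hxi a (h𝔞even a.2), mem_rootSpace.mp hx a]
    simp
  have hinv := hb_inv x a y
  rw [hxa, mem_rootSpace.mp hy a] at hinv
  simp only [map_neg, map_smul, LinearMap.neg_apply, LinearMap.smul_apply, smul_eq_mul] at hinv
  exact (mul_eq_zero.mp (by linear_combination -hinv : (μ a + ν a) * b x y = 0)).resolve_left ha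

theorem map_mem_rootSpace_neg (hθ_br : ∀ x y : g, θ (br x y) = br (θ x) (θ y))
    (h𝔞p : ∀ a ∈ 𝔞, θ a = -a) {μ : Module.Dual K 𝔞} {x : g} (hx : x ∈ rootSpace br 𝔞 μ) :
    θ x ∈ rootSpace br 𝔞 (-μ) := by
  refine mem_rootSpace.mpr fun a ↦ ?_
  have h := hθ_br a x
  rw [mem_rootSpace.mp hx a, h𝔞p a a.2, map_smul, map_neg, LinearMap.neg_apply] at h
  rw [LinearMap.neg_apply, neg_smul, h, neg_neg]

theorem map_mem_sup_rootSpace_neg (hθ_br : ∀ x y : g, θ (br x y) = br (θ x) (θ y))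
    (h𝔞p : ∀ a ∈ 𝔞, θ a = -a) (hθ_grade : ∀ i : ZMod 2, ∀ x ∈ gr i, θ x ∈ gr i)
    {j : ZMod 2} {μ : Module.Dual K 𝔞} {x : g}
    (hx : x ∈ gr j ⊓ rootSpace br 𝔞 μ ⊔ gr j ⊓ rootSpace br 𝔞 (-μ)) :
    θ x ∈ gr j ⊓ rootSpace br 𝔞 μ ⊔ gr j ⊓ rootSpace br 𝔞 (-μ) := by
  obtain ⟨x₁, ⟨hx₁j, hx₁⟩, x₂, ⟨hx₂j, hx₂⟩, rfl⟩ := Submodule.mem_sup.mp hx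
  have hθx₂ := map_mem_rootSpace_neg hθ_br h𝔞p hx₂
  rw [neg_neg] at hθx₂
  rw [map_add, add_comm]
  exact Submodule.add_mem_sup ⟨hθ_grade j x₂ hx₂j, hθx₂⟩
    ⟨hθ_grade j x₁ hx₁j, map_mem_rootSpace_neg hθ_br h𝔞p hx₁⟩

theorem eq_zero_of_forall_rootSpace (hb_nondeg : ∀ x : g, (∀ y : g, b x y = 0) → x = 0)
    (hgr : ⨆ j, gr j = ⊤) {Sig : Finset (Module.Dual K 𝔞)}
    (hSig : ∀ j : ZMod 2, gr j = ⨆ μ ∈ Sig, gr j ⊓ rootSpace br 𝔞 μ) {x : g}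
    (hx : ∀ j : ZMod 2, ∀ μ ∈ Sig, ∀ z ∈ gr j ⊓ rootSpace br 𝔞 μ, b x z = 0) : x = 0 := by
  refine hb_nondeg x fun y ↦ ?_
  suffices ⨆ j, gr j ≤ LinearMap.ker (b x) from this (hgr ▸ Submodule.mem_top)
  refine iSup_le fun j ↦ ?_
  rw [hSig j]
  exact iSup₂_le fun μ hμ z hz ↦ hx j μ hμ z hz

theorem eq_zero_of_forall_sup_rootSpace_neg (hb_even : ∀ x ∈ gr 0, ∀ y ∈ gr 1, b x y = 0)
    (hb_symm : ∀ i j : ZMod 2, ∀ x ∈ gr i, ∀ y ∈ gr j,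
      b x y = ((-1 : K) ^ (i.val * j.val)) * b y x)
    (hb_nondeg : ∀ x : g, (∀ y : g, b x y = 0) → x = 0)
    (hbr_skew : ∀ i j : ZMod 2, ∀ x ∈ gr i, ∀ y ∈ gr j,
      br x y = -(((-1 : K) ^ (i.val * j.val)) • br y x))
    (hb_inv : ∀ x y z : g, b (br x y) z = b x (br y z)) (h𝔞even : 𝔞 ≤ gr 0)
    (hgr : ⨆ j, gr j = ⊤) {Sig : Finset (Module.Dual K 𝔞)}
    (hSig : ∀ j : ZMod 2, gr j = ⨆ μ ∈ Sig, gr j ⊓ rootSpace br 𝔞 μ) {lam : Module.Dual K 𝔞}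
    {x : g} (hx : x ∈ gr 1 ⊓ rootSpace br 𝔞 lam ⊔ gr 1 ⊓ rootSpace br 𝔞 (-lam))
    (horth : ∀ z ∈ gr 1 ⊓ rootSpace br 𝔞 lam ⊔ gr 1 ⊓ rootSpace br 𝔞 (-lam), b x z = 0) :
    x = 0 := by
  refine eq_zero_of_forall_rootSpace hb_nondeg hgr hSig fun j μ _ z ⟨hzj, hz⟩ ↦ ?_
  obtain ⟨x₁, ⟨hx₁1, hx₁⟩, x₂, ⟨hx₂1, hx₂⟩, rfl⟩ := Submodule.mem_sup.mp hx
  fin_cases j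
  · rw [hb_symm 1 0 _ (add_mem hx₁1 hx₂1) z hzj,
      show (1 : ZMod 2).val * (0 : ZMod 2).val = 0 from rfl, pow_zero, one_mul,
      hb_even z hzj _ (add_mem hx₁1 hx₂1)]
  · by_cases hμ : μ = lam ∨ μ = -lam
    · obtain rfl | rfl := hμ
      exacts [horth z (Submodule.mem_sup_left ⟨hzj, hz⟩),
        horth z (Submodule.mem_sup_right ⟨hzj, hz⟩)]
    rw [not_or] at hμ
    rw [map_add, LinearMap.add_apply,
      apply_eq_zero_of_add_ne_zero hbr_skew hb_inv h𝔞even hx₁1 hx₁ hz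
        fun h ↦ hμ.2 (eq_neg_of_add_eq_zero_right h),
      apply_eq_zero_of_add_ne_zero hbr_skew hb_inv h𝔞even hx₂1 hx₂ hz
        fun h ↦ hμ.1 (neg_add_eq_zero.mp h).symm, add_zero]

theorem eq_zero_of_forall_apply_map_rootSpace [NeZero (2 : K)]
    (hb_even : ∀ x ∈ gr 0, ∀ y ∈ gr 1, b x y = 0)
    (hb_symm : ∀ i j : ZMod 2, ∀ x ∈ gr i, ∀ y ∈ gr j,
      b x y = ((-1 : K) ^ (i.val * j.val)) * b y x)
    (hb_nondeg : ∀ x : g, (∀ y : g, b x y = 0) → x = 0)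
    (hbr_skew : ∀ i j : ZMod 2, ∀ x ∈ gr i, ∀ y ∈ gr j,
      br x y = -(((-1 : K) ^ (i.val * j.val)) • br y x))
    (hb_inv : ∀ x y z : g, b (br x y) z = b x (br y z))
    (hθ_inv : ∀ x : g, θ (θ x) = x) (hθ_br : ∀ x y : g, θ (br x y) = br (θ x) (θ y))
    (hθ_grade : ∀ i : ZMod 2, ∀ x ∈ gr i, θ x ∈ gr i)
    (h𝔞even : 𝔞 ≤ gr 0) (h𝔞p : ∀ a ∈ 𝔞, θ a = -a)
    (hgr : ⨆ j, gr j = ⊤) {Sig : Finset (Module.Dual K 𝔞)}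
    (hSig : ∀ j : ZMod 2, gr j = ⨆ μ ∈ Sig, gr j ⊓ rootSpace br 𝔞 μ) {lam : Module.Dual K 𝔞}
    (hlam : lam ≠ 0) {x : g} (hx : x ∈ gr 1 ⊓ rootSpace br 𝔞 lam)
    (horth : ∀ y ∈ gr 1 ⊓ rootSpace br 𝔞 lam, b x (θ y) = 0) : x = 0 := by
  refine eq_zero_of_forall_sup_rootSpace_neg hb_even hb_symm hb_nondeg hbr_skew hb_inv h𝔞even
    hgr hSig (Submodule.mem_sup_left hx) fun z hz ↦ ?_
  obtain ⟨z₁, ⟨_, hz₁⟩, z₂, ⟨hz₂1, hz₂⟩, rfl⟩ := Submodule.mem_sup.mp hz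
  have h₁ : b x z₁ = 0 := apply_eq_zero_of_add_ne_zero hbr_skew hb_inv h𝔞even hx.1 hx.2 hz₁
    (two_smul K lam ▸ smul_ne_zero two_ne_zero hlam)
  have h₂ : b x z₂ = 0 := by
    have hθz₂ := map_mem_rootSpace_neg hθ_br h𝔞p hz₂
    rw [neg_neg] at hθz₂
    simpa only [hθ_inv] using horth (θ z₂) ⟨hθ_grade 1 z₂ hz₂1, hθz₂⟩
  rw [map_add, h₁, h₂, add_zero]

end SymmetricSuperpair

theorem stmt_14_general {g : Type*} [AddCommGroup g] [Module ℂ g] [FiniteDimensional ℂ g]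
    (gr : ZMod 2 → Submodule ℂ g) (hgr : DirectSum.IsInternal gr)
    (br : g →ₗ[ℂ] g →ₗ[ℂ] g) (b : g →ₗ[ℂ] g →ₗ[ℂ] ℂ) (θ : g →ₗ[ℂ] g)
    (hbr_skew : ∀ i j : ZMod 2, ∀ x ∈ gr i, ∀ y ∈ gr j,
      br x y = -(((-1 : ℂ) ^ (i.val * j.val)) • br y x))
    (hb_even : ∀ x ∈ gr 0, ∀ y ∈ gr 1, b x y = 0)
    (hb_symm : ∀ i j : ZMod 2, ∀ x ∈ gr i, ∀ y ∈ gr j,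
      b x y = ((-1 : ℂ) ^ (i.val * j.val)) * b y x)
    (hb_nondeg : ∀ x : g, (∀ y : g, b x y = 0) → x = 0)
    (hb_inv : ∀ x y z : g, b (br x y) z = b x (br y z))
    (hθ_inv : ∀ x : g, θ (θ x) = x)
    (hθ_br : ∀ x y : g, θ (br x y) = br (θ x) (θ y))
    (hθ_b : ∀ x y : g, b (θ x) (θ y) = b x y)
    (hθ_grade : ∀ i : ZMod 2, ∀ x ∈ gr i, θ x ∈ gr i)
    (𝔞 : Submodule ℂ g) (h𝔞even : 𝔞 ≤ gr 0) (h𝔞p : ∀ a ∈ 𝔞, θ a = -a) :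
    let rs : ZMod 2 → Module.Dual ℂ 𝔞 → Submodule ℂ g := fun j μ =>
      gr j ⊓ ⨅ h : 𝔞, LinearMap.ker (br h.1 - μ h • (LinearMap.id : g →ₗ[ℂ] g))
    ∀ Sig : Finset (Module.Dual ℂ 𝔞),
      (∀ j : ZMod 2, gr j = ⨆ μ ∈ Sig, rs j μ) →
      ∀ lam : Module.Dual ℂ 𝔞, lam ∈ Sig → lam ≠ 0 → rs 1 lam ≠ ⊥ →
      let g1lam := rs 1 lam ⊔ rs 1 (-lam)
      let k1lam := g1lam ⊓ LinearMap.ker (θ - LinearMap.id)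
      let p1lam := g1lam ⊓ LinearMap.ker (θ + LinearMap.id)
      Even (Module.finrank ℂ (rs 1 lam)) ∧
      (∀ x ∈ k1lam, ∀ y ∈ k1lam, b x (θ y) = -(b y (θ x))) ∧
      (∀ x ∈ k1lam, x ≠ 0 → ∃ y ∈ k1lam, b x (θ y) ≠ 0) ∧
      (∀ x ∈ p1lam, ∀ y ∈ p1lam, b x (θ y) = -(b y (θ x))) ∧
      (∀ x ∈ p1lam, x ≠ 0 → ∃ y ∈ p1lam, b x (θ y) ≠ 0) := by
  intro rs Sig hSig lam _ hlam _ g1lam k1lam p1lam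
  have htop : ⨆ j, gr j = ⊤ := hgr.submodule_iSup_eq_top
  have hanti : ∀ x ∈ gr 1, ∀ y ∈ gr 1, b x (θ y) = -b y (θ x) := fun x hx y hy ↦
    SymmetricSuperpair.apply_map_eq_neg_of_odd hb_symm hθ_inv hθ_b hθ_grade hx hy
  have hg1 : g1lam ≤ gr 1 := sup_le inf_le_left inf_le_left
  have hθg1 : ∀ x ∈ g1lam, θ x ∈ g1lam := fun x hx ↦
    SymmetricSuperpair.map_mem_sup_rootSpace_neg hθ_br h𝔞p hθ_grade hx
  have hnd : ∀ x ∈ g1lam, (∀ z ∈ g1lam, b x z = 0) → x = 0 := fun x hx ↦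
    SymmetricSuperpair.eq_zero_of_forall_sup_rootSpace_neg hb_even hb_symm hb_nondeg hbr_skew
      hb_inv h𝔞even htop hSig hx
  refine ⟨?_, fun x hx y hy ↦ hanti x (hg1 hx.1) y (hg1 hy.1),
    LinearMap.exists_apply_map_ne_zero_of_mem_ker_sub_id hθ_inv hθ_b hθg1 hnd,
    fun x hx y hy ↦ hanti x (hg1 hx.1) y (hg1 hy.1),
    LinearMap.exists_apply_map_ne_zero_of_mem_ker_add_id hθ_inv hθ_b hθg1 hnd⟩
  exact LinearMap.even_finrank_of_antisymm_of_nondegenerate_on (b.compl₂ θ) (rs 1 lam)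
    (fun x hx y hy ↦ hanti x hx.1 y hy.1) fun x hx ↦
    SymmetricSuperpair.eq_zero_of_forall_apply_map_rootSpace hb_even hb_symm hb_nondeg hbr_skew
      hb_inv hθ_inv hθ_br hθ_grade h𝔞even h𝔞p htop hSig hlam hx

/-- Let `(g,k)` be a reductive symmetric superpair: `g` a basic quadratic complex Lie
superalgebra with form `b` and involutive automorphism `θ` preserving `b` and the
grading, and let `𝔞 ⊆ p₀` (the `(-1)`-eigenspace of `θ` in `g₀`) be an abelian even
Cartan subspace for which `g` decomposes into simultaneous `𝔞`-eigenspaces, with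
finite set `Σ` of restricted weights.  For a restricted root `lam ≠ 0` with odd
restricted root space `g₁ᵃ^lam`, the odd multiplicity `m₁ = dim g₁ᵃ^lam` is even,
and the form `bᶿ(x,y) = b(x,θy)` restricts to a symplectic (nondegenerate
alternating) form on the projections `k₁^lam`, `p₁^lam` of
`g₁(lam) = g₁ᵃ^lam ⊕ g₁ᵃ^{-lam}` onto the `±1` eigenspaces of `θ`. -/
theorem stmt_14 {g : Type*} [AddCommGroup g] [Module ℂ g] [FiniteDimensional ℂ g]
    (gr : ZMod 2 → Submodule ℂ g) (hgr : DirectSum.IsInternal gr)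
    (br : g →ₗ[ℂ] g →ₗ[ℂ] g) (b : g →ₗ[ℂ] g →ₗ[ℂ] ℂ) (θ : g →ₗ[ℂ] g)
    (hbr_grade : ∀ i j : ZMod 2, ∀ x ∈ gr i, ∀ y ∈ gr j, br x y ∈ gr (i + j))
    (hbr_skew : ∀ i j : ZMod 2, ∀ x ∈ gr i, ∀ y ∈ gr j,
      br x y = -(((-1 : ℂ) ^ (i.val * j.val)) • br y x))
    (hbr_jacobi : ∀ i j : ZMod 2, ∀ x ∈ gr i, ∀ y ∈ gr j, ∀ z : g,
      br x (br y z) = br (br x y) z + ((-1 : ℂ) ^ (i.val * j.val)) • br y (br x z))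
    (hb_even : ∀ x ∈ gr 0, ∀ y ∈ gr 1, b x y = 0)
    (hb_symm : ∀ i j : ZMod 2, ∀ x ∈ gr i, ∀ y ∈ gr j,
      b x y = ((-1 : ℂ) ^ (i.val * j.val)) * b y x)
    (hb_nondeg : ∀ x : g, (∀ y : g, b x y = 0) → x = 0)
    (hb_inv : ∀ x y z : g, b (br x y) z = b x (br y z))
    (hθ_inv : ∀ x : g, θ (θ x) = x)
    (hθ_br : ∀ x y : g, θ (br x y) = br (θ x) (θ y))
    (hθ_b : ∀ x y : g, b (θ x) (θ y) = b x y)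
    (hθ_grade : ∀ i : ZMod 2, ∀ x ∈ gr i, θ x ∈ gr i)
    (𝔞 : Submodule ℂ g) (h𝔞even : 𝔞 ≤ gr 0) (h𝔞p : ∀ a ∈ 𝔞, θ a = -a)
    (h𝔞ab : ∀ a ∈ 𝔞, ∀ a' ∈ 𝔞, br a a' = 0) :
    let rs : ZMod 2 → Module.Dual ℂ 𝔞 → Submodule ℂ g := fun j μ =>
      gr j ⊓ ⨅ h : 𝔞, LinearMap.ker (br h.1 - μ h • (LinearMap.id : g →ₗ[ℂ] g))
    ∀ Sig : Finset (Module.Dual ℂ 𝔞),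
      (∀ j : ZMod 2, gr j = ⨆ μ ∈ Sig, rs j μ) →
      ∀ lam : Module.Dual ℂ 𝔞, lam ∈ Sig → lam ≠ 0 → rs 1 lam ≠ ⊥ →
      let g1lam := rs 1 lam ⊔ rs 1 (-lam)
      let k1lam := g1lam ⊓ LinearMap.ker (θ - LinearMap.id)
      let p1lam := g1lam ⊓ LinearMap.ker (θ + LinearMap.id)
      Even (Module.finrank ℂ (rs 1 lam)) ∧
      (∀ x ∈ k1lam, ∀ y ∈ k1lam, b x (θ y) = -(b y (θ x))) ∧
      (∀ x ∈ k1lam, x ≠ 0 → ∃ y ∈ k1lam, b x (θ y) ≠ 0) ∧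
      (∀ x ∈ p1lam, ∀ y ∈ p1lam, b x (θ y) = -(b y (θ x))) ∧
      (∀ x ∈ p1lam, x ≠ 0 → ∃ y ∈ p1lam, b x (θ y) ≠ 0) :=
  stmt_14_general gr hgr br b θ hbr_skew hb_even hb_symm hb_nondeg hb_inv hθ_inv hθ_br hθ_b hθ_grade
    𝔞 h𝔞even h𝔞p
end

section
/- In g = osp(2|2q,ℂ) with the involution θ given by conjugation with the matrix g = diag(I, 1_{2q}) where I = [[0,1],[1,0]], the fixed-point decomposition g = k ⊕ p satisfies: p₀ = 𝔞 is one-dimensional and self-centralizing in p₀, the centralizer of 𝔞 in p₁ is zero, there are exactly two restricted roots ±λ (both odd), the odd multiplicity is m_{1,λ} = dim p₁ = 2q, and λ(A_λ) ≠ 0 where A_λ is the coroot determined by the supertrace form. -/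
/-!
An odd element of `osp(2|2q,ℂ)` is determined by its bottom-left `2q × 2` block, i.e. by two
columns `u, v ∈ ℂ^{2q}`, and in these coordinates `ad H` acts as `(u, v) ↦ (-u, v)` while `θ`
acts as `(u, v) ↦ (v, u)`. So `g₁ ≅ ℂ^{2q} × ℂ^{2q}`, the `-1`- and `+1`-eigenspaces of `ad H` are
the two factors, `ad H` is injective on `g₁`, and `p₁` is the antidiagonal `{(u, -u)}`; each of
these has dimension `2q`. On the even side, the `o(2)` condition leaves only the
diagonal `diag(a, -a)` in the top-left block and `θ` kills the `sp(2q)` block, so `p₀ = ℂ H`.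
Finally `str(H²) = 2`, so `A_λ = H / 2`.
-/

open Matrix

namespace OspExample

variable (q : ℕ)

/-- Index type for `ℂ^{2|2q}`: two even coordinates followed by `q ⊕ q` odd ones. -/
abbrev Ix (q : ℕ) := Fin 2 ⊕ (Fin q ⊕ Fin q)

/-- The linear functional picking out the `(a,b)` entry of a matrix. -/
noncomputable def entry (a b : Ix q) : Matrix (Ix q) (Ix q) ℂ →ₗ[ℂ] ℂ where
  toFun x := x a b
  map_add' _ _ := rfl
  map_smul' _ _ := rfl

/-- The even part `g₀ = o(2,ℂ) ⊕ sp(2q,ℂ)` of `osp(2|2q,ℂ)`, realized with respect to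
the orthosymplectic form `I ⊕ J`, `I = [[0,1],[1,0]]`, `J = [[0,1],[-1,0]]` (in `q×q`
blocks): block-diagonal matrices `diag(m,A)` with `mᵀI + Im = 0`, `AᵀJ + JA = 0`,
written out entrywise. -/
noncomputable def g0 : Submodule ℂ (Matrix (Ix q) (Ix q) ℂ) :=
  (⨅ (i : Fin 2) (a : Fin q ⊕ Fin q), LinearMap.ker (entry q (Sum.inl i) (Sum.inr a))) ⊓
  (⨅ (i : Fin 2) (a : Fin q ⊕ Fin q), LinearMap.ker (entry q (Sum.inr a) (Sum.inl i))) ⊓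
  (⨅ (i : Fin 2) (j : Fin 2), LinearMap.ker
    (entry q (Sum.inl i) (Sum.inl j) + entry q (Sum.inl (1 - j)) (Sum.inl (1 - i)))) ⊓
  (⨅ (a : Fin q) (b : Fin q), LinearMap.ker
    (entry q (Sum.inr (Sum.inr a)) (Sum.inr (Sum.inl b))
      - entry q (Sum.inr (Sum.inr b)) (Sum.inr (Sum.inl a)))) ⊓
  (⨅ (a : Fin q) (b : Fin q), LinearMap.ker
    (entry q (Sum.inr (Sum.inl b)) (Sum.inr (Sum.inl a))
      + entry q (Sum.inr (Sum.inr a)) (Sum.inr (Sum.inr b)))) ⊓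
  (⨅ (a : Fin q) (b : Fin q), LinearMap.ker
    (entry q (Sum.inr (Sum.inl b)) (Sum.inr (Sum.inr a))
      - entry q (Sum.inr (Sum.inl a)) (Sum.inr (Sum.inr b))))

/-- The odd part `g₁` of `osp(2|2q,ℂ)`: block off-diagonal matrices whose top-right
block is determined by the bottom-left one (entrywise version of the supertranspose
condition, matching the explicit parametrization of the paper). -/
noncomputable def g1 : Submodule ℂ (Matrix (Ix q) (Ix q) ℂ) :=
  (⨅ (i : Fin 2) (j : Fin 2), LinearMap.ker (entry q (Sum.inl i) (Sum.inl j))) ⊓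
  (⨅ (a : Fin q ⊕ Fin q) (b : Fin q ⊕ Fin q),
    LinearMap.ker (entry q (Sum.inr a) (Sum.inr b))) ⊓
  (⨅ (i : Fin 2) (a : Fin q), LinearMap.ker
    (entry q (Sum.inl i) (Sum.inr (Sum.inl a))
      + entry q (Sum.inr (Sum.inr a)) (Sum.inl (1 - i)))) ⊓
  (⨅ (i : Fin 2) (a : Fin q), LinearMap.ker
    (entry q (Sum.inl i) (Sum.inr (Sum.inr a))
      - entry q (Sum.inr (Sum.inl a)) (Sum.inl (1 - i))))

/-- The matrix `g = diag(I, 1_{2q})` implementing the involution. -/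
noncomputable def gmat : Matrix (Ix q) (Ix q) ℂ := Matrix.fromBlocks !![0, 1; 1, 0] 0 0 1

/-- The involution `θ(x) = g x g`. -/
noncomputable def θmap : Matrix (Ix q) (Ix q) ℂ →ₗ[ℂ] Matrix (Ix q) (Ix q) ℂ :=
  (LinearMap.mulRight ℂ (gmat q)).comp (LinearMap.mulLeft ℂ (gmat q))

/-- The generator `H = diag(1,-1,0,…,0)` of the even Cartan subspace `𝔞 = p₀`. -/
noncomputable def H : Matrix (Ix q) (Ix q) ℂ := Matrix.fromBlocks !![1, 0; 0, -1] 0 0 0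

/-- `ad H = [H, ·]`. -/
noncomputable def adH : Matrix (Ix q) (Ix q) ℂ →ₗ[ℂ] Matrix (Ix q) (Ix q) ℂ :=
  LinearMap.mulLeft ℂ (H q) - LinearMap.mulRight ℂ (H q)

/-- The `(-1)`-eigenspace of `θ`. -/
noncomputable def pneg : Submodule ℂ (Matrix (Ix q) (Ix q) ℂ) :=
  LinearMap.ker (θmap q + LinearMap.id)

/-- `p₀ = g₀ ∩ p`. -/
noncomputable def p0 : Submodule ℂ (Matrix (Ix q) (Ix q) ℂ) := g0 q ⊓ pneg q

/-- `p₁ = g₁ ∩ p`. -/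
noncomputable def p1 : Submodule ℂ (Matrix (Ix q) (Ix q) ℂ) := g1 q ⊓ pneg q

/-- The supertrace functional `str x = ∑_{even i} x_{ii} - ∑_{odd a} x_{aa}`. -/
noncomputable def strf : Matrix (Ix q) (Ix q) ℂ →ₗ[ℂ] ℂ :=
  (∑ i : Fin 2, entry q (Sum.inl i) (Sum.inl i))
    - ∑ a : Fin q ⊕ Fin q, entry q (Sum.inr a) (Sum.inr a)

end OspExample

section

variable {R M N P Q : Type*} [Semiring R] [AddCommMonoid M] [AddCommMonoid N] [AddCommMonoid P]
  [AddCommMonoid Q] [Module R M] [Module R N] [Module R P] [Module R Q]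

theorem LinearMap.range_inf_ker_eq_map_ker (φ : M →ₗ[R] N) {f : N →ₗ[R] P} {f' : M →ₗ[R] Q}
    {ψ : Q →ₗ[R] P} (hψ : Function.Injective ψ) (h : f ∘ₗ φ = ψ ∘ₗ f') :
    LinearMap.range φ ⊓ LinearMap.ker f = Submodule.map φ (LinearMap.ker f') := by
  rw [← Submodule.map_comap_eq, ← LinearMap.ker_comp, h, LinearMap.ker_comp,
    LinearMap.ker_eq_bot_of_injective hψ]
  rfl

end

theorem LinearMap.ker_prodComm_add_id {R M : Type*} [Ring R] [AddCommGroup M] [Module R M] :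
    LinearMap.ker ((LinearEquiv.prodComm R M M).toLinearMap + LinearMap.id)
      = LinearMap.range (LinearMap.id.prod (-LinearMap.id) : M →ₗ[R] M × M) := by
  ext ⟨u, v⟩
  simp [Prod.ext_iff, add_comm v u, add_eq_zero_iff_neg_eq]

section

variable {K M : Type*} [Field K] [CharZero K] [AddCommGroup M] [Module K M]

theorem LinearMap.ker_prodMap_neg_id_sub_id :
    LinearMap.ker (LinearMap.prodMap (-LinearMap.id) LinearMap.id - LinearMap.id :
      M × M →ₗ[K] M × M) = LinearMap.range (LinearMap.inr K M M) := by
  ext ⟨u, v⟩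
  simp [Prod.ext_iff, eq_comm, ← neg_add', ← two_smul K]

theorem LinearMap.ker_prodMap_neg_id_add_id :
    LinearMap.ker (LinearMap.prodMap (-LinearMap.id) LinearMap.id + LinearMap.id :
      M × M →ₗ[K] M × M) = LinearMap.range (LinearMap.inl K M M) := by
  ext ⟨u, v⟩
  simp [Prod.ext_iff, eq_comm, ← two_smul K]

end

namespace OspExample

variable (q : ℕ)

local notation "I₂" => (!![0, 1; 1, 0] : Matrix (Fin 2) (Fin 2) ℂ)
local notation "H₂" => (!![1, 0; 0, -1] : Matrix (Fin 2) (Fin 2) ℂ)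

lemma entry_apply (a b : Ix q) (x : Matrix (Ix q) (Ix q) ℂ) : entry q a b x = x a b := rfl

lemma θmap_fromBlocks (A : Matrix (Fin 2) (Fin 2) ℂ) (B : Matrix (Fin 2) (Fin q ⊕ Fin q) ℂ)
    (C : Matrix (Fin q ⊕ Fin q) (Fin 2) ℂ) (D : Matrix (Fin q ⊕ Fin q) (Fin q ⊕ Fin q) ℂ) :
    θmap q (fromBlocks A B C D) = fromBlocks (I₂ * A * I₂) (I₂ * B) (C * I₂) D := by
  simp [θmap, gmat, fromBlocks_multiply]

lemma adH_fromBlocks (A : Matrix (Fin 2) (Fin 2) ℂ) (B : Matrix (Fin 2) (Fin q ⊕ Fin q) ℂ)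
    (C : Matrix (Fin q ⊕ Fin q) (Fin 2) ℂ) (D : Matrix (Fin q ⊕ Fin q) (Fin q ⊕ Fin q) ℂ) :
    adH q (fromBlocks A B C D) = fromBlocks (H₂ * A - A * H₂) (H₂ * B) (-(C * H₂)) 0 := by
  simp [adH, H, fromBlocks_multiply, sub_eq_add_neg, fromBlocks_neg, fromBlocks_add]

lemma mem_pneg (x : Matrix (Ix q) (Ix q) ℂ) : x ∈ pneg q ↔ θmap q x = -x := by
  rw [pneg, LinearMap.mem_ker, LinearMap.add_apply, LinearMap.id_apply, add_eq_zero_iff_eq_neg]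

lemma θmap_apply_inr_inr (x : Matrix (Ix q) (Ix q) ℂ) (c d : Fin q ⊕ Fin q) :
    θmap q x (Sum.inr c) (Sum.inr d) = x (Sum.inr c) (Sum.inr d) := by
  rw [← fromBlocks_toBlocks x, θmap_fromBlocks]
  rfl

lemma H_mem_p0 : H q ∈ p0 q := by
  refine ⟨?_, (mem_pneg q _).2 ?_⟩
  · simp [g0, entry_apply, H, Fin.forall_fin_two]
  · simp [H, θmap_fromBlocks, fromBlocks_neg]

lemma p0_le_span_H : p0 q ≤ Submodule.span ℂ {H q} := by
  intro x hx
  obtain ⟨hg0, hp⟩ := Submodule.mem_inf.1 hx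
  simp only [g0, Submodule.mem_inf, Submodule.mem_iInf, LinearMap.mem_ker, LinearMap.add_apply,
    entry_apply] at hg0
  obtain ⟨⟨⟨⟨⟨hB, hC⟩, hA⟩, -⟩, -⟩, -⟩ := hg0
  have h00 := hA 0 0
  have h01 := hA 0 1
  have h10 := hA 1 0
  norm_num at h00 h01 h10
  have h11 : x (Sum.inl 1) (Sum.inl 1) = -x (Sum.inl 0) (Sum.inl 0) := by
    linear_combination h00
  have hD (c d : Fin q ⊕ Fin q) : x (Sum.inr c) (Sum.inr d) = 0 := by
    have := congrFun (congrFun ((mem_pneg q x).1 hp) (Sum.inr c)) (Sum.inr d)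
    rwa [θmap_apply_inr_inr, Matrix.neg_apply, CharZero.eq_neg_self_iff] at this
  refine Submodule.mem_span_singleton.2 ⟨x (Sum.inl 0) (Sum.inl 0), ?_⟩
  ext (i | c) (j | d)
  · fin_cases i <;> fin_cases j <;> simp [H, h01, h10, h11]
  · simp [H, hB]
  · simp [H, hC]
  · simp [H, hD]

lemma p0_eq_span_H : p0 q = Submodule.span ℂ {H q} :=
  le_antisymm (p0_le_span_H q) ((Submodule.span_singleton_le_iff_mem _ _).2 (H_mem_p0 q))

lemma H_ne_zero : H q ≠ 0 := fun h => by
  simpa [H] using congrFun (congrFun h (Sum.inl 0)) (Sum.inl 0)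

lemma strf_H_mul_H : strf q (H q * H q) = 2 := by
  norm_num [H, fromBlocks_multiply, strf, entry_apply, Fin.sum_univ_two]

def J : Matrix (Fin q ⊕ Fin q) (Fin q ⊕ Fin q) ℂ := fromBlocks 0 1 (-1) 0

lemma vecMul_J_inl (w : Fin q ⊕ Fin q → ℂ) (a : Fin q) :
    (w ᵥ* J q) (Sum.inl a) = -w (Sum.inr a) := by
  simp [J, vecMul, dotProduct, Fintype.sum_sum_type, one_apply]

lemma vecMul_J_inr (w : Fin q ⊕ Fin q → ℂ) (a : Fin q) :
    (w ᵥ* J q) (Sum.inr a) = w (Sum.inl a) := by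
  simp [J, vecMul, dotProduct, Fintype.sum_sum_type, one_apply]

/-- The element of `g₁` whose bottom-left block `B` has columns `p.1`, `p.2`; the defining
condition of `osp` forces its top-right block to be `I Bᵀ J`. -/
def oddPart : ((Fin q ⊕ Fin q → ℂ) × (Fin q ⊕ Fin q → ℂ)) →ₗ[ℂ] Matrix (Ix q) (Ix q) ℂ where
  toFun p := fromBlocks 0 (of ![p.2 ᵥ* J q, p.1 ᵥ* J q]) (of fun c => ![p.1 c, p.2 c]) 0
  map_add' p p' := by
    ext (i | c) (j | j) <;> try fin_cases i
    all_goals try fin_cases j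
    all_goals simp [add_vecMul]
  map_smul' t p := by
    ext (i | c) (j | j) <;> try fin_cases i
    all_goals try fin_cases j
    all_goals simp [smul_vecMul]

lemma mem_g1 (x : Matrix (Ix q) (Ix q) ℂ) :
    x ∈ g1 q ↔
      (∀ i j : Fin 2, x (Sum.inl i) (Sum.inl j) = 0) ∧
      (∀ a b : Fin q ⊕ Fin q, x (Sum.inr a) (Sum.inr b) = 0) ∧
      ∀ a : Fin q,
        x (Sum.inl 0) (Sum.inr (Sum.inl a)) = -x (Sum.inr (Sum.inr a)) (Sum.inl 1) ∧
        x (Sum.inl 1) (Sum.inr (Sum.inl a)) = -x (Sum.inr (Sum.inr a)) (Sum.inl 0) ∧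
        x (Sum.inl 0) (Sum.inr (Sum.inr a)) = x (Sum.inr (Sum.inl a)) (Sum.inl 1) ∧
        x (Sum.inl 1) (Sum.inr (Sum.inr a)) = x (Sum.inr (Sum.inl a)) (Sum.inl 0) := by
  simp only [g1, Submodule.mem_inf, Submodule.mem_iInf, LinearMap.mem_ker, LinearMap.add_apply,
    LinearMap.sub_apply, entry_apply, Fin.forall_fin_two, add_eq_zero_iff_eq_neg, sub_eq_zero,
    forall_and]
  norm_num [and_assoc]

lemma range_oddPart : LinearMap.range (oddPart q) = g1 q := by
  refine le_antisymm ?_ fun x hx => ?_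
  · rintro _ ⟨p, rfl⟩
    refine (mem_g1 q _).2 ⟨fun i j => rfl, fun a b => rfl, fun a => ?_⟩
    simp [oddPart, vecMul_J_inl, vecMul_J_inr]
  · obtain ⟨hA, hD, hB⟩ := (mem_g1 q x).1 hx
    refine ⟨(fun c => x (Sum.inr c) (Sum.inl 0), fun c => x (Sum.inr c) (Sum.inl 1)), ?_⟩
    ext (i | c) (j | a | a)
    · exact (hA i j).symm
    · fin_cases i <;> simp [oddPart, vecMul_J_inl, hB]
    · fin_cases i <;> simp [oddPart, vecMul_J_inr, hB]
    · fin_cases j <;> rfl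
    · exact (hD _ _).symm
    · exact (hD _ _).symm

lemma oddPart_injective : Function.Injective (oddPart q) := by
  intro p p' h
  have h0 := fun c => congrFun (congrFun h (Sum.inr c)) (Sum.inl 0)
  have h1 := fun c => congrFun (congrFun h (Sum.inr c)) (Sum.inl 1)
  simp only [oddPart] at h0 h1
  exact Prod.ext (funext h0) (funext h1)

lemma adH_comp_oddPart :
    adH q ∘ₗ oddPart q = oddPart q ∘ₗ LinearMap.prodMap (-LinearMap.id) LinearMap.id := by
  refine LinearMap.ext fun ⟨u, v⟩ => ?_
  simp only [LinearMap.comp_apply, LinearMap.prodMap_apply, oddPart, LinearMap.coe_mk,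
    AddHom.coe_mk, adH_fromBlocks]
  congr 1
  · simp
  · ext i b; fin_cases i <;> simp [neg_vecMul]
  · ext c j; fin_cases j <;> simp [mul_apply, Fin.sum_univ_two]

lemma θmap_comp_oddPart :
    θmap q ∘ₗ oddPart q = oddPart q ∘ₗ (LinearEquiv.prodComm ℂ _ _).toLinearMap := by
  refine LinearMap.ext fun ⟨u, v⟩ => ?_
  simp only [LinearMap.comp_apply, LinearEquiv.coe_coe, LinearEquiv.prodComm_apply, oddPart,
    LinearMap.coe_mk, AddHom.coe_mk, θmap_fromBlocks]
  congr 1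
  · simp
  · ext i b; fin_cases i <;> simp
  · ext c j; fin_cases j <;> simp [mul_apply, Fin.sum_univ_two]

lemma g1_inf_ker_eq_map {f : Matrix (Ix q) (Ix q) ℂ →ₗ[ℂ] Matrix (Ix q) (Ix q) ℂ}
    {f' : (Fin q ⊕ Fin q → ℂ) × (Fin q ⊕ Fin q → ℂ) →ₗ[ℂ]
      (Fin q ⊕ Fin q → ℂ) × (Fin q ⊕ Fin q → ℂ)}
    (h : f ∘ₗ oddPart q = oddPart q ∘ₗ f') :
    g1 q ⊓ LinearMap.ker f = Submodule.map (oddPart q) (LinearMap.ker f') := by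
  rw [← range_oddPart]
  exact LinearMap.range_inf_ker_eq_map_ker _ (oddPart_injective q) h

lemma g1_inf_ker_adH_sub_id : g1 q ⊓ LinearMap.ker (adH q - LinearMap.id) =
    Submodule.map (oddPart q) (LinearMap.range (LinearMap.inr ℂ _ _)) := by
  have h : (adH q - LinearMap.id) ∘ₗ oddPart q =
      oddPart q ∘ₗ (LinearMap.prodMap (-LinearMap.id) LinearMap.id - LinearMap.id) := by
    rw [LinearMap.sub_comp, LinearMap.comp_sub, adH_comp_oddPart, LinearMap.id_comp,
      LinearMap.comp_id]
  rw [g1_inf_ker_eq_map q h, LinearMap.ker_prodMap_neg_id_sub_id]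

lemma g1_inf_ker_adH_add_id : g1 q ⊓ LinearMap.ker (adH q + LinearMap.id) =
    Submodule.map (oddPart q) (LinearMap.range (LinearMap.inl ℂ _ _)) := by
  have h : (adH q + LinearMap.id) ∘ₗ oddPart q =
      oddPart q ∘ₗ (LinearMap.prodMap (-LinearMap.id) LinearMap.id + LinearMap.id) := by
    rw [LinearMap.add_comp, LinearMap.comp_add, adH_comp_oddPart, LinearMap.id_comp,
      LinearMap.comp_id]
  rw [g1_inf_ker_eq_map q h, LinearMap.ker_prodMap_neg_id_add_id]

lemma g1_inf_ker_adH : g1 q ⊓ LinearMap.ker (adH q) = ⊥ := by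
  rw [g1_inf_ker_eq_map q (adH_comp_oddPart q)]
  simp

lemma p1_eq_map : p1 q =
    Submodule.map (oddPart q) (LinearMap.range (LinearMap.id.prod (-LinearMap.id))) := by
  have h : (θmap q + LinearMap.id) ∘ₗ oddPart q =
      oddPart q ∘ₗ ((LinearEquiv.prodComm ℂ _ _).toLinearMap + LinearMap.id) := by
    rw [LinearMap.add_comp, LinearMap.comp_add, θmap_comp_oddPart, LinearMap.id_comp,
      LinearMap.comp_id]
  rw [p1, pneg, g1_inf_ker_eq_map q h, LinearMap.ker_prodComm_add_id]

lemma finrank_map_oddPart_range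
    {f : (Fin q ⊕ Fin q → ℂ) →ₗ[ℂ] (Fin q ⊕ Fin q → ℂ) × (Fin q ⊕ Fin q → ℂ)}
    (hf : Function.Injective f) :
    Module.finrank ℂ (Submodule.map (oddPart q) (LinearMap.range f)) = 2 * q := by
  rw [← LinearMap.range_comp,
    LinearMap.finrank_range_of_inj (f := oddPart q ∘ₗ f) ((oddPart_injective q).comp hf),
    Module.finrank_fintype_fun_eq_card, Fintype.card_sum, Fintype.card_fin, two_mul]

lemma finrank_g1_inf_ker_adH_sub_id :
    Module.finrank ℂ ↥(g1 q ⊓ LinearMap.ker (adH q - LinearMap.id)) = 2 * q := by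
  rw [g1_inf_ker_adH_sub_id]
  exact finrank_map_oddPart_range q LinearMap.inr_injective

lemma finrank_g1_inf_ker_adH_add_id :
    Module.finrank ℂ ↥(g1 q ⊓ LinearMap.ker (adH q + LinearMap.id)) = 2 * q := by
  rw [g1_inf_ker_adH_add_id]
  exact finrank_map_oddPart_range q LinearMap.inl_injective

lemma finrank_p1 : Module.finrank ℂ ↥(p1 q) = 2 * q := by
  rw [p1_eq_map]
  exact finrank_map_oddPart_range q fun _ _ h => congrArg Prod.fst h

lemma g1_eq_sup_eigenspaces :
    g1 q = (g1 q ⊓ LinearMap.ker (adH q - LinearMap.id)) ⊔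
      (g1 q ⊓ LinearMap.ker (adH q + LinearMap.id)) := by
  rw [g1_inf_ker_adH_sub_id, g1_inf_ker_adH_add_id, ← Submodule.map_sup, sup_comm,
    LinearMap.sup_range_inl_inr, Submodule.map_top, range_oddPart]

lemma p1_inf_ker_adH : p1 q ⊓ LinearMap.ker (adH q) = ⊥ :=
  eq_bot_iff.2 ((inf_le_inf_right _ inf_le_left).trans (g1_inf_ker_adH q).le)

/-- In `g = osp(2|2q,ℂ)` with the involution `θ(x) = gxg`, `g = diag(I,1_{2q})`:
`p₀ = 𝔞` is one-dimensional, spanned by `H` (hence self-centralizing in `p₀`);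
the centralizer of `𝔞` in `p₁` is zero; `g₁` splits into the two (±1)-eigenspaces
of `ad H`, both nonzero, i.e. there are exactly the two (odd) restricted roots `±λ`
with `λ(H) = 1`; the odd multiplicity is `m_{1,λ} = dim p₁ = 2q`; and the coroot
`A_λ ∈ 𝔞` determined by `str(A_λ h) = λ(h)` satisfies `λ(A_λ) ≠ 0`. -/
theorem stmt_18 (hq : 1 ≤ q) :
    (p0 q = Submodule.span ℂ {H q} ∧ H q ≠ 0) ∧
    (p1 q ⊓ LinearMap.ker (adH q) = ⊥) ∧
    (g1 q = (g1 q ⊓ LinearMap.ker (adH q - LinearMap.id)) ⊔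
        (g1 q ⊓ LinearMap.ker (adH q + LinearMap.id)) ∧
      g1 q ⊓ LinearMap.ker (adH q - LinearMap.id) ≠ ⊥ ∧
      g1 q ⊓ LinearMap.ker (adH q + LinearMap.id) ≠ ⊥) ∧
    (Module.finrank ℂ ↥(g1 q ⊓ LinearMap.ker (adH q - LinearMap.id)) = 2 * q ∧
      Module.finrank ℂ ↥(p1 q) = 2 * q) ∧
    (∃ A ∈ p0 q, ∃ t : ℂ, A = t • H q ∧
      (∀ c : ℂ, strf q (A * (c • H q)) = c) ∧ t ≠ 0) := by
  have ne_bot {S : Submodule ℂ (Matrix (Ix q) (Ix q) ℂ)} (hS : Module.finrank ℂ S = 2 * q) :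
      S ≠ ⊥ := fun h => by
    rw [h, finrank_bot] at hS
    omega
  refine ⟨⟨p0_eq_span_H q, H_ne_zero q⟩, p1_inf_ker_adH q,
    ⟨g1_eq_sup_eigenspaces q, ne_bot (finrank_g1_inf_ker_adH_sub_id q),
      ne_bot (finrank_g1_inf_ker_adH_add_id q)⟩,
    ⟨finrank_g1_inf_ker_adH_sub_id q, finrank_p1 q⟩,
    (2 : ℂ)⁻¹ • H q, Submodule.smul_mem _ _ (H_mem_p0 q), (2 : ℂ)⁻¹, rfl, fun c => ?_, by norm_num⟩
  rw [smul_mul_smul_comm, map_smul, strf_H_mul_H, smul_eq_mul]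
  field_simp

end OspExample
end
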